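/- Let k be a field of characteristic ≠ 2 and let E, Ẽ, Ê be the free-nilpotent-of-class-2 quotients of the Lie algebras S = ⟨x₁,x₂,x₃,x₄ | [x₁,x₂], [x₃,x₂]+[x₁,x₄]⟩, S̃ = ⟨x₁,x₂,x₃,x₄ | [x₁,x₂], [x₁,x₃]⟩ and Ŝ = ⟨x₁,x₂,x₃,x₄ | [x₁,x₂], [x₄,x₃]⟩, i.e. E = S/[S,S,S], Ẽ = S̃/[S̃,S̃,S̃], Ê = Ŝ/[Ŝ,Ŝ,Ŝ]. Then E, Ẽ, Ê are pairwise non-isomorphic as Lie algebras. -/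

import Mathlib

/-!
Index `i : Fin 4` stands for the generator `xᵢ₊₁`.

Each of the three algebras is spanned by `x₁, …, x₄` modulo its derived algebra, which is central,
so a bracket `⁅v, w⁆` only depends on the degree-one coordinates of `v` and `w`; that it does not
vanish is detected by a Lie map to a model `V × W` with bracket
`⁅(x, a), (y, b)⁆ = (0, B x y - B y x)`. Two isomorphism invariants separate the algebras. In `Ẽ`
the generator `x₁` commutes with `x₂` and `x₃`, so `ad x₁` has rank one, whereas in `E` and `Ê`
every non-central `v` has two linearly independent brackets `⁅v, xᵢ⁆`, `⁅v, xⱼ⁆`. In `Ê` the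
commuting pairs `(x₁, x₂)` and `(x₄, x₃)` have non-commuting first members, whereas in `E` a
Plücker relation forces every pair that commutes and is independent modulo the centre into
`span (x₁, x₂)` plus the centre, which is abelian.
-/

universe u

variable (k : Type u) [Field k]

open FreeLieAlgebra

/-- The Lie algebra `⟨x₁,x₂,x₃,x₄ | r₁, r₂⟩`: the quotient of the free Lie algebra on four
generators by the ideal generated by the two relators. -/
def twoRelatorAlg (r₁ r₂ : FreeLieAlgebra k (Fin 4)) : Type u :=
  FreeLieAlgebra k (Fin 4) ⧸ LieSubmodule.lieSpan k (FreeLieAlgebra k (Fin 4))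
    ({r₁, r₂} : Set (FreeLieAlgebra k (Fin 4)))

noncomputable instance (r₁ r₂ : FreeLieAlgebra k (Fin 4)) : LieRing (twoRelatorAlg k r₁ r₂) := by
  unfold twoRelatorAlg; infer_instance

noncomputable instance (r₁ r₂ : FreeLieAlgebra k (Fin 4)) : LieAlgebra k (twoRelatorAlg k r₁ r₂) := by
  unfold twoRelatorAlg; infer_instance

/-- The free-nilpotent-of-class-2 quotient `A/[A,A,A]` of a Lie algebra `A`. -/
def classTwoQuot (A : Type u) [LieRing A] [LieAlgebra k A] : Type u :=
  A ⧸ (LieModule.lowerCentralSeries k A A 2)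

noncomputable instance (A : Type u) [LieRing A] [LieAlgebra k A] : LieRing (classTwoQuot k A) := by
  unfold classTwoQuot; infer_instance

noncomputable instance (A : Type u) [LieRing A] [LieAlgebra k A] :
    LieAlgebra k (classTwoQuot k A) := by
  unfold classTwoQuot; infer_instance

/-- `S = ⟨x₁,x₂,x₃,x₄ | [x₁,x₂], [x₃,x₂]+[x₁,x₄]⟩`. -/
noncomputable def S : Type u :=
  twoRelatorAlg k ⁅of k (0 : Fin 4), of k (1 : Fin 4)⁆ (⁅of k (2 : Fin 4), of k (1 : Fin 4)⁆ + ⁅of k (0 : Fin 4), of k (3 : Fin 4)⁆)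

/-- `S̃ = ⟨x₁,x₂,x₃,x₄ | [x₁,x₂], [x₁,x₃]⟩`. -/
noncomputable def St : Type u := twoRelatorAlg k ⁅of k (0 : Fin 4), of k (1 : Fin 4)⁆ ⁅of k (0 : Fin 4), of k (2 : Fin 4)⁆

/-- `Ŝ = ⟨x₁,x₂,x₃,x₄ | [x₁,x₂], [x₄,x₃]⟩`. -/
noncomputable def Sh : Type u := twoRelatorAlg k ⁅of k (0 : Fin 4), of k (1 : Fin 4)⁆ ⁅of k (3 : Fin 4), of k (2 : Fin 4)⁆

noncomputable instance : LieRing (S k) := by unfold S; infer_instance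
noncomputable instance : LieAlgebra k (S k) := by unfold S; infer_instance
noncomputable instance : LieRing (St k) := by unfold St; infer_instance
noncomputable instance : LieAlgebra k (St k) := by unfold St; infer_instance
noncomputable instance : LieRing (Sh k) := by unfold Sh; infer_instance
noncomputable instance : LieAlgebra k (Sh k) := by unfold Sh; infer_instance

lemma linearIndependent_pair_of_mul_sub_mul_ne_zero {K ι : Type*} [CommRing K] [NoZeroDivisors K]
    {x y : ι → K} (i j : ι) (h : x i * y j - x j * y i ≠ 0) : LinearIndependent K ![x, y] := by
  refine LinearIndependent.pair_iff.mpr fun s t hst => ?_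
  have hi : s * x i + t * y i = 0 := by simpa using congrFun hst i
  have hj : s * x j + t * y j = 0 := by simpa using congrFun hst j
  exact ⟨(mul_eq_zero.mp (by linear_combination y j * hi - y i * hj)).resolve_right h,
    (mul_eq_zero.mp (by linear_combination x i * hj - x j * hi)).resolve_right h⟩

lemma eq_smul_of_mul_eq_mul {K ι : Type*} [Field K] {p r : ι → K} {j : ι} (hj : p j ≠ 0)
    (h : ∀ i, p i * r j = p j * r i) : r = (r j / p j) • p := by
  funext i
  simp only [Pi.smul_apply, smul_eq_mul]
  field_simp
  linear_combination -h i

lemma not_linearIndependent_smul_pair {R M : Type*} [CommRing R] [Nontrivial R] [AddCommGroup M]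
    [Module R M] (a b : R) (u : M) : ¬ LinearIndependent R ![a • u, b • u] := by
  intro h
  obtain ⟨hb, ha⟩ := LinearIndependent.pair_iff.mp h b (-a) (by
    rw [smul_smul, smul_smul, neg_mul, mul_comm, neg_smul, add_neg_cancel])
  exact h.ne_zero 0 (by simp [neg_eq_zero.mp ha])

open LieModule (lowerCentralSeries)
open LieAlgebra (center)

namespace LieIdeal

variable {R L L' : Type*} [CommRing R] [LieRing L] [LieAlgebra R L] [LieRing L'] [LieAlgebra R L']
  (I : LieIdeal R L)

def mkQ : L →ₗ⁅R⁆ L ⧸ I where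
  __ := (I : Submodule R L).mkQ
  map_lie' := rfl

lemma mkQ_surjective : Function.Surjective I.mkQ :=
  Submodule.mkQ_surjective _

lemma mkQ_eq_zero_iff {x : L} : I.mkQ x = 0 ↔ x ∈ I :=
  LieSubmodule.Quotient.mk_eq_zero'

def liftQ (f : L →ₗ⁅R⁆ L') (h : I ≤ f.ker) : L ⧸ I →ₗ⁅R⁆ L' where
  __ := (I : Submodule R L).liftQ (f : L →ₗ[R] L') fun _ hx => h hx
  map_lie' := by
    rintro ⟨x⟩ ⟨y⟩
    exact f.map_lie x y

end LieIdeal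

section ClassTwo

variable {R L : Type*} [CommRing R] [LieRing L] [LieAlgebra R L]

lemma lie_mem_lowerCentralSeries_one (x y : L) : ⁅x, y⁆ ∈ lowerCentralSeries R L L 1 := by
  rw [LieModule.lowerCentralSeries_succ, LieModule.lowerCentralSeries_zero]
  exact LieSubmodule.lie_mem_lie (LieSubmodule.mem_top x) (LieSubmodule.mem_top y)

lemma lowerCentralSeries_two_eq_bot_iff :
    lowerCentralSeries R L L 2 = ⊥ ↔ lowerCentralSeries R L L 1 ≤ center R L := by
  rw [LieModule.lowerCentralSeries_succ, LieSubmodule.lie_eq_bot_iff]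
  simp only [LieSubmodule.mem_top, true_implies, SetLike.le_def, LieModule.mem_maxTrivSubmodule]
  exact ⟨fun h m hm x => h x m hm, fun h x m hm => h hm x⟩

lemma lowerCentralSeries_one_le_center_iff :
    lowerCentralSeries R L L 1 ≤ center R L ↔ ∀ x y z : L, ⁅x, ⁅y, z⁆⁆ = 0 := by
  rw [LieModule.lowerCentralSeries_succ, LieModule.lowerCentralSeries_zero,
    LieSubmodule.lie_le_iff]
  simp only [LieSubmodule.mem_top, true_implies, LieModule.mem_maxTrivSubmodule]
  exact ⟨fun h x y z => h y z x, fun h y z x => h x y z⟩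

lemma lie_eq_lie_of_sub_mem_center {v v' w w' : L} (hv : v - v' ∈ center R L)
    (hw : w - w' ∈ center R L) : ⁅v, w⁆ = ⁅v', w'⁆ := by
  rw [LieModule.mem_maxTrivSubmodule] at hv hw
  have hv' : ⁅v - v', w⁆ = 0 := by rw [← lie_skew, hv w, neg_zero]
  have hw' : ⁅v', w - w'⁆ = 0 := hw v'
  rw [sub_lie, sub_eq_zero] at hv'
  rw [lie_sub, sub_eq_zero] at hw'
  rw [hv', hw']

end ClassTwo

namespace FreeLieAlgebra

variable {R ι L : Type*} [CommRing R] [LieRing L] [LieAlgebra R L]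

theorem range_le_of_apply_of_mem (f : FreeLieAlgebra R ι →ₗ⁅R⁆ L) (N : LieSubalgebra R L)
    (h : ∀ i, f (of R i) ∈ N) : f.range ≤ N := by
  let g : FreeLieAlgebra R ι →ₗ⁅R⁆ N := lift R fun i => ⟨f (of R i), h i⟩
  have hg : N.incl.comp g = f := hom_ext fun i => by simp [g]
  rintro _ ⟨y, rfl⟩
  rw [← hg]
  exact (g y).2

theorem span_sup_lowerCentralSeries_one_eq_top_of_surjective (f : FreeLieAlgebra R ι →ₗ⁅R⁆ L)
    (hf : Function.Surjective f) :
    Submodule.span R (Set.range (f ∘ of R)) ⊔ (lowerCentralSeries R L L 1).toSubmodule = ⊤ := by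
  let N : LieSubalgebra R L :=
    { toSubmodule :=
        Submodule.span R (Set.range (f ∘ of R)) ⊔ (lowerCentralSeries R L L 1).toSubmodule
      lie_mem' := fun _ _ => Submodule.mem_sup_right (lie_mem_lowerCentralSeries_one _ _) }
  have hN : f.range ≤ N := range_le_of_apply_of_mem f N fun i =>
    Submodule.mem_sup_left (Submodule.subset_span ⟨i, rfl⟩)
  rw [(f.range_eq_top).mpr hf] at hN
  exact eq_top_iff.mpr fun v _ => hN (LieSubalgebra.mem_top v)

end FreeLieAlgebra

section Invariants

variable (R L : Type*) [CommRing R] [LieRing L] [LieAlgebra R L]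

def HasAdOfRankOne : Prop :=
  ∃ v u : L, (∃ w : L, ⁅v, w⁆ ≠ 0) ∧ ∀ w, ∃ c : R, ⁅v, w⁆ = c • u

variable {L} in
def IsCommutingPair (v w : L) : Prop :=
  ⁅v, w⁆ = 0 ∧ ∀ c : R, w - c • v ∉ center R L

def HasNoncommutingCommutingPairs : Prop :=
  ∃ v₁ v₂ w₁ w₂ : L, IsCommutingPair R v₁ v₂ ∧ IsCommutingPair R w₁ w₂ ∧ ⁅v₁, w₁⁆ ≠ 0

variable {R L} {L' : Type*} [LieRing L'] [LieAlgebra R L']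

lemma LieEquiv.map_mem_center_iff (e : L ≃ₗ⁅R⁆ L') {x : L} :
    e x ∈ center R L' ↔ x ∈ center R L := by
  simp only [LieModule.mem_maxTrivSubmodule]
  refine ⟨fun h y => ?_, fun h y => ?_⟩
  · simpa using congrArg e.symm ((e.map_lie y x).trans (h (e y)))
  · rw [← e.apply_symm_apply y, ← e.map_lie, h, map_zero]

lemma HasAdOfRankOne.map (e : L ≃ₗ⁅R⁆ L') (h : HasAdOfRankOne R L) : HasAdOfRankOne R L' := by
  obtain ⟨v, u, ⟨w, hw⟩, hu⟩ := h
  refine ⟨e v, e u, ⟨e w, by simpa [← e.map_lie] using hw⟩, fun w' => ?_⟩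
  obtain ⟨c, hc⟩ := hu (e.symm w')
  exact ⟨c, by rw [← e.apply_symm_apply w', ← e.map_lie, hc, map_smul]⟩

lemma IsCommutingPair.map (e : L ≃ₗ⁅R⁆ L') {v w : L} (h : IsCommutingPair R v w) :
    IsCommutingPair R (e v) (e w) :=
  ⟨by rw [← e.map_lie, h.1, map_zero], fun c hc => h.2 c <| by
    rwa [← map_smul, ← map_sub, e.map_mem_center_iff] at hc⟩

lemma HasNoncommutingCommutingPairs.map (e : L ≃ₗ⁅R⁆ L')
    (h : HasNoncommutingCommutingPairs R L) : HasNoncommutingCommutingPairs R L' :=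
  let ⟨v₁, v₂, w₁, w₂, hv, hw, hvw⟩ := h
  ⟨e v₁, e v₂, e w₁, e w₂, hv.map e, hw.map e, by simpa [← e.map_lie] using hvw⟩

end Invariants

section TwoStepLie

variable {R V W : Type*} [CommRing R] [AddCommGroup V] [Module R V] [AddCommGroup W] [Module R W]

def TwoStepLie (_B : V →ₗ[R] V →ₗ[R] W) : Type _ := V × W

namespace TwoStepLie

variable (B : V →ₗ[R] V →ₗ[R] W)

instance : AddCommGroup (TwoStepLie B) := inferInstanceAs (AddCommGroup (V × W))

instance : Module R (TwoStepLie B) := inferInstanceAs (Module R (V × W))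

def ofProd : (V × W) ≃ₗ[R] TwoStepLie B where
  __ := LinearEquiv.refl R (V × W)

instance : LieRing (TwoStepLie B) where
  bracket x y := ofProd B (0, (B - B.flip) ((ofProd B).symm x).1 ((ofProd B).symm y).1)
  add_lie _ _ _ := (ofProd B).symm.injective <| Prod.ext (by simp) (by simp; abel)
  lie_add _ _ _ := (ofProd B).symm.injective <| Prod.ext (by simp) (by simp; abel)
  lie_self _ := (ofProd B).symm.injective <| Prod.ext (by simp) (by simp)
  leibniz_lie _ _ _ := (ofProd B).symm.injective <| Prod.ext (by simp) (by simp)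

lemma lie_ofProd (p q : V × W) :
    ⁅ofProd B p, ofProd B q⁆ = ofProd B (0, (B - B.flip) p.1 q.1) :=
  rfl

instance : LieAlgebra R (TwoStepLie B) where
  lie_smul _ _ _ := (ofProd B).symm.injective <|
    Prod.ext (by simp [Bracket.bracket]) (by simp [Bracket.bracket, smul_sub])

lemma lowerCentralSeries_two_eq_bot :
    lowerCentralSeries R (TwoStepLie B) (TwoStepLie B) 2 = ⊥ := by
  rw [lowerCentralSeries_two_eq_bot_iff, lowerCentralSeries_one_le_center_iff]
  intro x y z
  rw [← (ofProd B).apply_symm_apply x, ← (ofProd B).apply_symm_apply y,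
    ← (ofProd B).apply_symm_apply z, lie_ofProd, lie_ofProd]
  simp

variable {ι : Type*} [DecidableEq ι] (B : (ι → R) →ₗ[R] (ι → R) →ₗ[R] W)

noncomputable def ofFree : FreeLieAlgebra R ι →ₗ⁅R⁆ TwoStepLie B :=
  FreeLieAlgebra.lift R fun i => ofProd B (Pi.single i 1, 0)

@[simp]
lemma ofFree_of (i : ι) : ofFree B (of R i) = ofProd B (Pi.single i 1, 0) :=
  FreeLieAlgebra.lift_of_apply _ _

end TwoStepLie

end TwoStepLie

noncomputable def classTwoQuot.mk (A : Type u) [LieRing A] [LieAlgebra k A] :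
    A →ₗ⁅k⁆ classTwoQuot k A :=
  LieIdeal.mkQ _

lemma classTwoQuot.lowerCentralSeries_one_le_center (A : Type u) [LieRing A] [LieAlgebra k A] :
    lowerCentralSeries k (classTwoQuot k A) (classTwoQuot k A) 1 ≤
      center k (classTwoQuot k A) := by
  have hmap := LieIdeal.lowerCentralSeries_map_eq 2 (f := classTwoQuot.mk k A)
    (LieIdeal.mkQ_surjective _)
  rw [← lowerCentralSeries_two_eq_bot_iff, ← hmap, LieIdeal.map_eq_bot_iff]
  exact fun _ hx => (LieIdeal.mkQ_eq_zero_iff _).mpr hx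

variable {k}

namespace twoRelatorAlg

variable (r₁ r₂ : FreeLieAlgebra k (Fin 4))

noncomputable def mk : FreeLieAlgebra k (Fin 4) →ₗ⁅k⁆ twoRelatorAlg k r₁ r₂ :=
  LieIdeal.mkQ _

noncomputable def proj : FreeLieAlgebra k (Fin 4) →ₗ⁅k⁆ classTwoQuot k (twoRelatorAlg k r₁ r₂) :=
  (classTwoQuot.mk k _).comp (mk r₁ r₂)

noncomputable def ofCoords : (Fin 4 → k) →ₗ[k] classTwoQuot k (twoRelatorAlg k r₁ r₂) :=
  Fintype.linearCombination k fun i => proj r₁ r₂ (of k i)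

variable {r₁ r₂}

lemma proj_surjective : Function.Surjective (proj r₁ r₂) :=
  (LieIdeal.mkQ_surjective _).comp (LieIdeal.mkQ_surjective _)

lemma proj_eq_zero_of_mem {r : FreeLieAlgebra k (Fin 4)} (hr : r ∈ ({r₁, r₂} : Set _)) :
    proj r₁ r₂ r = 0 := by
  have : mk r₁ r₂ r = 0 := (LieIdeal.mkQ_eq_zero_iff _).mpr (LieSubmodule.subset_lieSpan hr)
  simp [proj, this]

lemma lie_proj_of_eq_zero {i j : Fin 4} (h : ⁅of k i, of k j⁆ ∈ ({r₁, r₂} : Set _)) :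
    ⁅proj r₁ r₂ (of k i), proj r₁ r₂ (of k j)⁆ = 0 := by
  rw [← LieHom.map_lie]
  exact proj_eq_zero_of_mem h

lemma ofCoords_apply (a : Fin 4 → k) : ofCoords r₁ r₂ a = ∑ i, a i • proj r₁ r₂ (of k i) :=
  Fintype.linearCombination_apply _ _ _

lemma ofCoords_single (i : Fin 4) : ofCoords r₁ r₂ (Pi.single i 1) = proj r₁ r₂ (of k i) := by
  simp [ofCoords]

lemma exists_sub_ofCoords_mem_center (v : classTwoQuot k (twoRelatorAlg k r₁ r₂)) :
    ∃ a, v - ofCoords r₁ r₂ a ∈ center k (classTwoQuot k (twoRelatorAlg k r₁ r₂)) := by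
  have hv : v ∈ Submodule.span k (Set.range (proj r₁ r₂ ∘ of k)) ⊔
      (lowerCentralSeries k (classTwoQuot k (twoRelatorAlg k r₁ r₂))
        (classTwoQuot k (twoRelatorAlg k r₁ r₂)) 1).toSubmodule := by
    rw [FreeLieAlgebra.span_sup_lowerCentralSeries_one_eq_top_of_surjective _ proj_surjective]
    exact Submodule.mem_top
  obtain ⟨y, hy, z, hz, rfl⟩ := Submodule.mem_sup.mp hv
  obtain ⟨a, rfl⟩ := (Submodule.mem_span_range_iff_exists_fun k).mp hy
  exact ⟨a, by simpa [ofCoords_apply] using classTwoQuot.lowerCentralSeries_one_le_center k _ hz⟩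

lemma lie_ofCoords_eq_zero_of_coords_two_three_eq_zero
    (h : ⁅proj r₁ r₂ (of k 0), proj r₁ r₂ (of k 1)⁆ = 0) {p q : Fin 4 → k}
    (hp : p 2 = 0 ∧ p 3 = 0) (hq : q 2 = 0 ∧ q 3 = 0) :
    ⁅ofCoords r₁ r₂ p, ofCoords r₁ r₂ q⁆ = 0 := by
  have h' : ⁅proj r₁ r₂ (of k 1), proj r₁ r₂ (of k 0)⁆ = 0 := by
    rw [← neg_eq_zero, lie_skew, h]
  simp [ofCoords_apply, Fin.sum_univ_four, hp.1, hp.2, hq.1, hq.2, h, h']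

noncomputable def liftClassTwo {L : Type*} [LieRing L] [LieAlgebra k L]
    (f : FreeLieAlgebra k (Fin 4) →ₗ⁅k⁆ L) (hL : lowerCentralSeries k L L 2 = ⊥)
    (h₁ : f r₁ = 0) (h₂ : f r₂ = 0) :
    classTwoQuot k (twoRelatorAlg k r₁ r₂) →ₗ⁅k⁆ L :=
  let g : twoRelatorAlg k r₁ r₂ →ₗ⁅k⁆ L := LieIdeal.liftQ _ f <| by
    rw [LieSubmodule.lieSpan_le]
    rintro _ (rfl | rfl) <;> assumption
  LieIdeal.liftQ _ g <| by
    rw [← LieIdeal.map_eq_bot_iff, ← le_bot_iff, ← hL]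
    exact LieIdeal.map_lowerCentralSeries_le 2

@[simp]
lemma liftClassTwo_proj {L : Type*} [LieRing L] [LieAlgebra k L]
    (f : FreeLieAlgebra k (Fin 4) →ₗ⁅k⁆ L) (hL : lowerCentralSeries k L L 2 = ⊥)
    (h₁ : f r₁ = 0) (h₂ : f r₂ = 0) (y : FreeLieAlgebra k (Fin 4)) :
    liftClassTwo f hL h₁ h₂ (proj r₁ r₂ y) = f y :=
  rfl

section Model

variable {W : Type*} [AddCommGroup W] [Module k W] (B : (Fin 4 → k) →ₗ[k] (Fin 4 → k) →ₗ[k] W)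
  (h₁ : TwoStepLie.ofFree B r₁ = 0) (h₂ : TwoStepLie.ofFree B r₂ = 0)

noncomputable def toTwoStepLie : classTwoQuot k (twoRelatorAlg k r₁ r₂) →ₗ⁅k⁆ TwoStepLie B :=
  liftClassTwo (TwoStepLie.ofFree B) (TwoStepLie.lowerCentralSeries_two_eq_bot B) h₁ h₂

lemma toTwoStepLie_ofCoords (a : Fin 4 → k) :
    toTwoStepLie B h₁ h₂ (ofCoords r₁ r₂ a) = TwoStepLie.ofProd B (a, 0) := by
  simp only [ofCoords_apply, map_sum, map_smul, toTwoStepLie, liftClassTwo_proj,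
    TwoStepLie.ofFree_of]
  simp_rw [← map_smul, ← map_sum]
  congr 1
  ext i <;> simp [Prod.fst_sum, Prod.snd_sum, Pi.single_apply]

lemma toTwoStepLie_lie_ofCoords (a b : Fin 4 → k) :
    toTwoStepLie B h₁ h₂ ⁅ofCoords r₁ r₂ a, ofCoords r₁ r₂ b⁆ =
      TwoStepLie.ofProd B (0, (B - B.flip) a b) := by
  rw [LieHom.map_lie, toTwoStepLie_ofCoords, toTwoStepLie_ofCoords, TwoStepLie.lie_ofProd]

include h₁ h₂

lemma lie_ofCoords_ne_zero {a b : Fin 4 → k} (h : (B - B.flip) a b ≠ 0) :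
    ⁅ofCoords r₁ r₂ a, ofCoords r₁ r₂ b⁆ ≠ 0 := fun h0 => h <| by
  have := toTwoStepLie_lie_ofCoords B h₁ h₂ a b
  rw [h0, map_zero, eq_comm, LinearEquiv.map_eq_zero_iff] at this
  exact (Prod.mk_eq_zero.mp this).2

lemma ofCoords_not_mem_center {a : Fin 4 → k} (b : Fin 4 → k) (h : (B - B.flip) b a ≠ 0) :
    ofCoords r₁ r₂ a ∉ center k (classTwoQuot k (twoRelatorAlg k r₁ r₂)) := fun ha =>
  lie_ofCoords_ne_zero B h₁ h₂ h ((LieModule.mem_maxTrivSubmodule _ _ _ _).mp ha _)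

lemma linearIndependent_lie_ofCoords {a b c : Fin 4 → k}
    (h : LinearIndependent k ![(B - B.flip) a b, (B - B.flip) a c]) :
    LinearIndependent k
      ![⁅ofCoords r₁ r₂ a, ofCoords r₁ r₂ b⁆, ⁅ofCoords r₁ r₂ a, ofCoords r₁ r₂ c⁆] := by
  rw [LinearIndependent.pair_iff] at h ⊢
  intro s t hst
  refine h s t ?_
  simpa [toTwoStepLie_lie_ofCoords B h₁ h₂] using
    congrArg (Prod.snd ∘ (TwoStepLie.ofProd B).symm ∘ toTwoStepLie B h₁ h₂) hst

theorem not_hasAdOfRankOne (hB : ∀ p ≠ 0, ∃ i j : Fin 4,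
      LinearIndependent k ![(B - B.flip) p (Pi.single i 1), (B - B.flip) p (Pi.single j 1)]) :
    ¬ HasAdOfRankOne k (classTwoQuot k (twoRelatorAlg k r₁ r₂)) := by
  rintro ⟨v, u, ⟨w, hw⟩, hu⟩
  obtain ⟨p, hp⟩ := exists_sub_ofCoords_mem_center v
  have hv : ∀ b, ⁅v, ofCoords r₁ r₂ b⁆ = ⁅ofCoords r₁ r₂ p, ofCoords r₁ r₂ b⁆ := fun b =>
    lie_eq_lie_of_sub_mem_center hp (by simp)
  have hp0 : p ≠ 0 := by
    rintro rfl
    exact hw (by rw [lie_eq_lie_of_sub_mem_center hp (w' := w) (by simp), map_zero, zero_lie])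
  obtain ⟨i, j, hij⟩ := hB p hp0
  obtain ⟨c, hc⟩ := hu (ofCoords r₁ r₂ (Pi.single i 1))
  obtain ⟨d, hd⟩ := hu (ofCoords r₁ r₂ (Pi.single j 1))
  have := linearIndependent_lie_ofCoords B h₁ h₂ hij
  rw [← hv, ← hv, hc, hd] at this
  exact not_linearIndependent_smul_pair c d u this

theorem exists_coords_of_isCommutingPair {v w : classTwoQuot k (twoRelatorAlg k r₁ r₂)}
    (h : IsCommutingPair k v w) :
    ∃ p r, v - ofCoords r₁ r₂ p ∈ center k (classTwoQuot k (twoRelatorAlg k r₁ r₂)) ∧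
      (B - B.flip) p r = 0 ∧ ∀ c : k, r ≠ c • p := by
  obtain ⟨p, hp⟩ := exists_sub_ofCoords_mem_center v
  obtain ⟨r, hr⟩ := exists_sub_ofCoords_mem_center w
  refine ⟨p, r, hp, ?_, ?_⟩
  · by_contra hpr
    exact lie_ofCoords_ne_zero B h₁ h₂ hpr (by rw [← lie_eq_lie_of_sub_mem_center hp hr, h.1])
  · rintro c rfl
    refine h.2 c ?_
    have : w - c • v = (w - ofCoords r₁ r₂ (c • p)) - c • (v - ofCoords r₁ r₂ p) := by
      rw [map_smul, smul_sub]
      abel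
    rw [this]
    exact sub_mem hr (SMulMemClass.smul_mem c hp)

end Model

end twoRelatorAlg

namespace S

-- `B x y - B y x` lists the coordinates of `⁅x, y⁆` in the basis
-- `⁅x₁, x₃⁆, ⁅x₁, x₄⁆ = ⁅x₂, x₃⁆, ⁅x₂, x₄⁆, ⁅x₃, x₄⁆` of the derived algebra of `E`.
variable (k) in
noncomputable def bilin : (Fin 4 → k) →ₗ[k] (Fin 4 → k) →ₗ[k] (Fin 4 → k) :=
  LinearMap.mk₂ k (fun x y => ![x 0 * y 2, x 0 * y 3 + x 1 * y 2, x 1 * y 3, x 2 * y 3])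
    (by intros; ext i; fin_cases i <;> simp <;> ring)
    (by intros; ext i; fin_cases i <;> simp <;> ring)
    (by intros; ext i; fin_cases i <;> simp <;> ring)
    (by intros; ext i; fin_cases i <;> simp <;> ring)

lemma ofFree_bilin_r₁ : TwoStepLie.ofFree (bilin k) ⁅of k (0 : Fin 4), of k (1 : Fin 4)⁆ = 0 := by
  simp only [LieHom.map_lie, TwoStepLie.ofFree_of, TwoStepLie.lie_ofProd,
    LinearEquiv.map_eq_zero_iff, Prod.mk_eq_zero, true_and]
  ext i; fin_cases i <;> simp [bilin]

lemma ofFree_bilin_r₂ : TwoStepLie.ofFree (bilin k)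
    (⁅of k (2 : Fin 4), of k (1 : Fin 4)⁆ + ⁅of k (0 : Fin 4), of k (3 : Fin 4)⁆) = 0 := by
  rw [map_add]
  simp [TwoStepLie.lie_ofProd, ← map_add]
  ext i; fin_cases i <;> simp [bilin]

lemma exists_linearIndependent_skew_single {p : Fin 4 → k} (hp : p ≠ 0) :
    ∃ i j : Fin 4, LinearIndependent k ![(bilin k - (bilin k).flip) p (Pi.single i 1),
      (bilin k - (bilin k).flip) p (Pi.single j 1)] := by
  obtain ⟨l, hl⟩ := Function.ne_iff.mp hp
  fin_cases l
  · exact ⟨2, 3, linearIndependent_pair_of_mul_sub_mul_ne_zero 0 1 (by simpa [bilin] using hl)⟩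
  · exact ⟨2, 3, linearIndependent_pair_of_mul_sub_mul_ne_zero 1 2 (by simpa [bilin] using hl)⟩
  · exact ⟨0, 3, linearIndependent_pair_of_mul_sub_mul_ne_zero 0 3 (by simpa [bilin] using hl)⟩
  · exact ⟨0, 1, linearIndependent_pair_of_mul_sub_mul_ne_zero 1 2 (by simpa [bilin] using hl)⟩

lemma coords_two_three_eq_zero {p r : Fin 4 → k} (h : (bilin k - (bilin k).flip) p r = 0)
    (hr : ∀ c : k, r ≠ c • p) : p 2 = 0 ∧ p 3 = 0 := by
  have e0 : p 0 * r 2 - r 0 * p 2 = 0 := by simpa [bilin] using congrFun h 0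
  have e1 : p 0 * r 3 + p 1 * r 2 - (r 0 * p 3 + r 1 * p 2) = 0 := by
    simpa [bilin] using congrFun h 1
  have e2 : p 1 * r 3 - r 1 * p 3 = 0 := by simpa [bilin] using congrFun h 2
  have e3 : p 2 * r 3 - r 2 * p 3 = 0 := by simpa [bilin] using congrFun h 3
  -- Plücker relation for the `2 × 2` minors of `(p, r)`
  have h12 : p 1 * r 2 - p 2 * r 1 = 0 := pow_eq_zero_iff two_ne_zero |>.mp <| by
    linear_combination (p 1 * r 2 - p 2 * r 1) * e1 + (p 0 * r 1 - p 1 * r 0) * e3 -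
      (p 1 * r 3 - p 3 * r 1) * e0
  refine ⟨by_contra fun h2 => hr _ (eq_smul_of_mul_eq_mul h2 fun i => ?_),
    by_contra fun h3 => hr _ (eq_smul_of_mul_eq_mul h3 fun i => ?_)⟩
  · fin_cases i <;> simp only [Fin.zero_eta, Fin.mk_one, Fin.reduceFinMk]
    exacts [by linear_combination e0, by linear_combination h12, by linear_combination -e3]
  · fin_cases i <;> simp only [Fin.zero_eta, Fin.mk_one, Fin.reduceFinMk]
    exacts [by linear_combination e1 - h12, by linear_combination e2, by linear_combination e3]

theorem not_hasAdOfRankOne : ¬ HasAdOfRankOne k (classTwoQuot k (S k)) :=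
  twoRelatorAlg.not_hasAdOfRankOne (bilin k) ofFree_bilin_r₁ ofFree_bilin_r₂
    fun _ => exists_linearIndependent_skew_single

theorem not_hasNoncommutingCommutingPairs :
    ¬ HasNoncommutingCommutingPairs k (classTwoQuot k (S k)) := by
  show ¬ HasNoncommutingCommutingPairs k (classTwoQuot k (twoRelatorAlg k
    ⁅of k (0 : Fin 4), of k (1 : Fin 4)⁆
    (⁅of k (2 : Fin 4), of k (1 : Fin 4)⁆ + ⁅of k (0 : Fin 4), of k (3 : Fin 4)⁆)))
  rintro ⟨v₁, v₂, w₁, w₂, hv, hw, hvw⟩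
  obtain ⟨p, r, hp, hpr, hr⟩ :=
    twoRelatorAlg.exists_coords_of_isCommutingPair (bilin k) ofFree_bilin_r₁ ofFree_bilin_r₂ hv
  obtain ⟨q, s, hq, hqs, hs⟩ :=
    twoRelatorAlg.exists_coords_of_isCommutingPair (bilin k) ofFree_bilin_r₁ ofFree_bilin_r₂ hw
  apply hvw
  rw [lie_eq_lie_of_sub_mem_center hp hq]
  exact twoRelatorAlg.lie_ofCoords_eq_zero_of_coords_two_three_eq_zero
    (twoRelatorAlg.lie_proj_of_eq_zero (by simp))
    (coords_two_three_eq_zero hpr hr) (coords_two_three_eq_zero hqs hs)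

end S

namespace St

-- Only the coordinate of `⁅x, y⁆` along `⁅x₁, x₄⁆` is recorded.
variable (k) in
noncomputable def bilin : (Fin 4 → k) →ₗ[k] (Fin 4 → k) →ₗ[k] k :=
  LinearMap.mk₂ k (fun x y => x 0 * y 3) (by intros; simp; ring) (by intros; simp; ring)
    (by intros; simp; ring) (by intros; simp; ring)

lemma ofFree_bilin_r₁ : TwoStepLie.ofFree (bilin k) ⁅of k (0 : Fin 4), of k (1 : Fin 4)⁆ = 0 := by
  simp only [LieHom.map_lie, TwoStepLie.ofFree_of, TwoStepLie.lie_ofProd,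
    LinearEquiv.map_eq_zero_iff, Prod.mk_eq_zero, true_and]
  simp [bilin]

lemma ofFree_bilin_r₂ : TwoStepLie.ofFree (bilin k) ⁅of k (0 : Fin 4), of k (2 : Fin 4)⁆ = 0 := by
  simp only [LieHom.map_lie, TwoStepLie.ofFree_of, TwoStepLie.lie_ofProd,
    LinearEquiv.map_eq_zero_iff, Prod.mk_eq_zero, true_and]
  simp [bilin]

theorem hasAdOfRankOne : HasAdOfRankOne k (classTwoQuot k (St k)) := by
  show HasAdOfRankOne k (classTwoQuot k (twoRelatorAlg k
    ⁅of k (0 : Fin 4), of k (1 : Fin 4)⁆ ⁅of k (0 : Fin 4), of k (2 : Fin 4)⁆))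
  let x (i : Fin 4) := twoRelatorAlg.proj ⁅of k (0 : Fin 4), of k (1 : Fin 4)⁆
    ⁅of k (0 : Fin 4), of k (2 : Fin 4)⁆ (of k i)
  refine ⟨x 0, ⁅x 0, x 3⁆, ⟨x 3, ?_⟩, fun w => ?_⟩
  · simp only [x, ← twoRelatorAlg.ofCoords_single]
    exact twoRelatorAlg.lie_ofCoords_ne_zero (bilin k) ofFree_bilin_r₁ ofFree_bilin_r₂
      (by simp [bilin])
  · obtain ⟨b, hb⟩ := twoRelatorAlg.exists_sub_ofCoords_mem_center w
    refine ⟨b 3, ?_⟩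
    rw [lie_eq_lie_of_sub_mem_center (v' := x 0) (by simp) hb, twoRelatorAlg.ofCoords_apply,
      lie_sum, Fin.sum_univ_four]
    simp [x, twoRelatorAlg.lie_proj_of_eq_zero]

end St

namespace Sh

-- `B x y - B y x` lists the coordinates of `⁅x, y⁆` in the basis
-- `⁅x₁, x₃⁆, ⁅x₁, x₄⁆, ⁅x₂, x₃⁆, ⁅x₂, x₄⁆` of the derived algebra of `Ê`.
variable (k) in
noncomputable def bilin : (Fin 4 → k) →ₗ[k] (Fin 4 → k) →ₗ[k] (Fin 4 → k) :=
  LinearMap.mk₂ k (fun x y => ![x 0 * y 2, x 0 * y 3, x 1 * y 2, x 1 * y 3])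
    (by intros; ext i; fin_cases i <;> simp <;> ring)
    (by intros; ext i; fin_cases i <;> simp <;> ring)
    (by intros; ext i; fin_cases i <;> simp <;> ring)
    (by intros; ext i; fin_cases i <;> simp <;> ring)

lemma ofFree_bilin_r₁ : TwoStepLie.ofFree (bilin k) ⁅of k (0 : Fin 4), of k (1 : Fin 4)⁆ = 0 := by
  simp only [LieHom.map_lie, TwoStepLie.ofFree_of, TwoStepLie.lie_ofProd,
    LinearEquiv.map_eq_zero_iff, Prod.mk_eq_zero, true_and]
  ext i; fin_cases i <;> simp [bilin]

lemma ofFree_bilin_r₂ : TwoStepLie.ofFree (bilin k) ⁅of k (3 : Fin 4), of k (2 : Fin 4)⁆ = 0 := by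
  simp only [LieHom.map_lie, TwoStepLie.ofFree_of, TwoStepLie.lie_ofProd,
    LinearEquiv.map_eq_zero_iff, Prod.mk_eq_zero, true_and]
  ext i; fin_cases i <;> simp [bilin]

lemma exists_linearIndependent_skew_single {p : Fin 4 → k} (hp : p ≠ 0) :
    ∃ i j : Fin 4, LinearIndependent k ![(bilin k - (bilin k).flip) p (Pi.single i 1),
      (bilin k - (bilin k).flip) p (Pi.single j 1)] := by
  obtain ⟨l, hl⟩ := Function.ne_iff.mp hp
  fin_cases l
  · exact ⟨2, 3, linearIndependent_pair_of_mul_sub_mul_ne_zero 0 1 (by simpa [bilin] using hl)⟩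
  · exact ⟨2, 3, linearIndependent_pair_of_mul_sub_mul_ne_zero 2 3 (by simpa [bilin] using hl)⟩
  · exact ⟨0, 1, linearIndependent_pair_of_mul_sub_mul_ne_zero 0 2 (by simpa [bilin] using hl)⟩
  · exact ⟨0, 1, linearIndependent_pair_of_mul_sub_mul_ne_zero 1 3 (by simpa [bilin] using hl)⟩

theorem not_hasAdOfRankOne : ¬ HasAdOfRankOne k (classTwoQuot k (Sh k)) :=
  twoRelatorAlg.not_hasAdOfRankOne (bilin k) ofFree_bilin_r₁ ofFree_bilin_r₂
    fun _ => exists_linearIndependent_skew_single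

theorem hasNoncommutingCommutingPairs :
    HasNoncommutingCommutingPairs k (classTwoQuot k (Sh k)) := by
  show HasNoncommutingCommutingPairs k (classTwoQuot k (twoRelatorAlg k
    ⁅of k (0 : Fin 4), of k (1 : Fin 4)⁆ ⁅of k (3 : Fin 4), of k (2 : Fin 4)⁆))
  let x (i : Fin 4) := twoRelatorAlg.ofCoords ⁅of k (0 : Fin 4), of k (1 : Fin 4)⁆
    ⁅of k (3 : Fin 4), of k (2 : Fin 4)⁆ (Pi.single i 1)
  refine ⟨x 0, x 1, x 3, x 2, ⟨?_, fun c => ?_⟩, ⟨?_, fun c => ?_⟩, ?_⟩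
  · simp only [x, twoRelatorAlg.ofCoords_single]
    exact twoRelatorAlg.lie_proj_of_eq_zero (by simp)
  · rw [← map_smul, ← map_sub]
    exact twoRelatorAlg.ofCoords_not_mem_center (bilin k) ofFree_bilin_r₁ ofFree_bilin_r₂
      (Pi.single 2 1) fun h => by simpa [bilin] using congrFun h 2
  · simp only [x, twoRelatorAlg.ofCoords_single]
    exact twoRelatorAlg.lie_proj_of_eq_zero (by simp)
  · rw [← map_smul, ← map_sub]
    exact twoRelatorAlg.ofCoords_not_mem_center (bilin k) ofFree_bilin_r₁ ofFree_bilin_r₂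
      (Pi.single 0 1) fun h => by simpa [bilin] using congrFun h 0
  · exact twoRelatorAlg.lie_ofCoords_ne_zero (bilin k) ofFree_bilin_r₁ ofFree_bilin_r₂
      fun h => by simpa [bilin] using congrFun h 1

end Sh

theorem classTwoQuots_pairwise_nonisomorphic_general :
    (¬ Nonempty (classTwoQuot k (S k) ≃ₗ⁅k⁆ classTwoQuot k (St k))) ∧
    (¬ Nonempty (classTwoQuot k (S k) ≃ₗ⁅k⁆ classTwoQuot k (Sh k))) ∧
    (¬ Nonempty (classTwoQuot k (St k) ≃ₗ⁅k⁆ classTwoQuot k (Sh k))) :=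
  ⟨fun ⟨e⟩ => S.not_hasAdOfRankOne (St.hasAdOfRankOne.map e.symm),
    fun ⟨e⟩ => S.not_hasNoncommutingCommutingPairs (Sh.hasNoncommutingCommutingPairs.map e.symm),
    fun ⟨e⟩ => Sh.not_hasAdOfRankOne (St.hasAdOfRankOne.map e)⟩

/-- Over a field of characteristic `≠ 2`, the class-2 nilpotent quotients
`E = S/[S,S,S]`, `Ẽ = S̃/[S̃,S̃,S̃]`, `Ê = Ŝ/[Ŝ,Ŝ,Ŝ]` of the three two-relator Lie
algebras above are pairwise non-isomorphic (hence so are `S`, `S̃`, `Ŝ`). -/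
theorem classTwoQuots_pairwise_nonisomorphic (h2 : (2 : k) ≠ 0) :
    (¬ Nonempty (classTwoQuot k (S k) ≃ₗ⁅k⁆ classTwoQuot k (St k))) ∧
    (¬ Nonempty (classTwoQuot k (S k) ≃ₗ⁅k⁆ classTwoQuot k (Sh k))) ∧
    (¬ Nonempty (classTwoQuot k (St k) ≃ₗ⁅k⁆ classTwoQuot k (Sh k))) :=
  classTwoQuots_pairwise_nonisomorphic_general
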